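/- arXiv:2510.24338 — 2 statements merged into one kernel-verified Lean document; each statement's English description precedes it below -/
import Mathlib

section
/- Linear stability with velocity diffusion (Theorem 1.1). Let n ≥ 2, r > n−1, and let b̃ ∈ ℝⁿ satisfy the Diophantine condition with exponent r. Let m ≥ 0 and let U₀, B₀ ∈ H^m(𝕋ⁿ) be divergence-free with ∫_{𝕋ⁿ} U₀ dx = ∫_{𝕋ⁿ} B₀ dx = 0. Let (U,B) solve the linear system ∂ₜU − ΔU = b̃·∇B, ∂ₜB = b̃·∇U, ∇·U = ∇·B = 0, (U,B)(·,0) = (U₀,B₀) on 𝕋ⁿ. Then there is a constant C > 0 such that for every s ∈ [0,m] and t ≥ 0: ‖U(t)‖_{H^s} ≤ C(1+t)^{−(1/2 + (m−s+1)/(2(1+r)))} ‖(U₀,B₀)‖_{H^m} and ‖B(t)‖_{H^s} ≤ C(1+t)^{−(m−s)/(2(1+r))} ‖(U₀,B₀)‖_{H^m}. -/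
open scoped BigOperators
open MeasureTheory

noncomputable section

namespace MHD

/-- The frequency lattice `ℤⁿ` of the torus `𝕋ⁿ = (ℝ/2πℤ)ⁿ`. -/
abbrev Freq (n : ℕ) := Fin n → ℤ

/-- Fourier coefficients of a (vector) field on `𝕋ⁿ`: a field is identified with the
family of its Fourier coefficients `f̂(k) ∈ ℂⁿ`, `k ∈ ℤⁿ`. -/
abbrev Coef (n : ℕ) := Freq n → Fin n → ℂ

/-- `|k|²`. -/
def k2 {n : ℕ} (k : Freq n) : ℝ := ∑ i, ((k i : ℝ)) ^ 2

/-- `|k|`. -/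
def knorm {n : ℕ} (k : Freq n) : ℝ := Real.sqrt (k2 k)

/-- `b̃·k`. -/
def bdot {n : ℕ} (b : Fin n → ℝ) (k : Freq n) : ℝ := ∑ i, b i * (k i : ℝ)

/-- `|b̃|`, the Euclidean norm of a constant vector. -/
def vnormR {n : ℕ} (b : Fin n → ℝ) : ℝ := Real.sqrt (∑ i, (b i) ^ 2)

/-- Squared length of a coefficient vector: `|f̂(k)|²`. -/
def vnormSq {n : ℕ} (v : Fin n → ℂ) : ℝ := ∑ i, ‖v i‖ ^ 2

/-- The Diophantine condition: `|b̃·k| ≥ c|k|^{-r}` for all `k ∈ ℤⁿ \ {0}`. -/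
def Diophantine {n : ℕ} (b : Fin n → ℝ) (r c : ℝ) : Prop :=
  ∀ k : Freq n, k ≠ 0 → c / (knorm k) ^ r ≤ |bdot b k|

/-- Squared Sobolev norm `‖f‖_{H^s}² = Σ_k (1+|k|²)^s |f̂(k)|²`. -/
def sobSq {n : ℕ} (s : ℝ) (f : Coef n) : ℝ :=
  ∑' k : Freq n, (1 + k2 k) ^ s * vnormSq (f k)

/-- Sobolev norm `‖f‖_{H^s}`. -/
def sobNorm {n : ℕ} (s : ℝ) (f : Coef n) : ℝ := Real.sqrt (sobSq s f)

/-- Squared Sobolev norm of a pair `‖(f,g)‖_{H^s}²`. -/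
def pairSobSq {n : ℕ} (s : ℝ) (f g : Coef n) : ℝ := sobSq s f + sobSq s g

/-- Sobolev norm of a pair `‖(f,g)‖_{H^s}`. -/
def pairNorm {n : ℕ} (s : ℝ) (f g : Coef n) : ℝ := Real.sqrt (pairSobSq s f g)

/-- Membership in `H^s(𝕋ⁿ)`. -/
def MemSob {n : ℕ} (s : ℝ) (f : Coef n) : Prop :=
  Summable fun k : Freq n => (1 + k2 k) ^ s * vnormSq (f k)

/-- Divergence-free: `k·f̂(k) = 0` for every `k`. -/
def DivFree {n : ℕ} (f : Coef n) : Prop :=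
  ∀ k : Freq n, (∑ i, (k i : ℂ) * f k i) = 0

/-- Fourier coefficients of the transport term `u·∇v`:
`(u·∇v)^(k) = Σ_j i (û(j)·(k-j)) v̂(k-j)`. -/
def transport {n : ℕ} (u v : Coef n) (k : Freq n) (i : Fin n) : ℂ :=
  ∑' j : Freq n, (Complex.I * ∑ l, u j l * (((k - j) l : ℤ) : ℂ)) * v (k - j) i

/-- The Helmholtz–Leray projection `P` in Fourier variables. -/
def leray {n : ℕ} (f : Coef n) (k : Freq n) (i : Fin n) : ℂ :=
  if k = 0 then f k i
  else f k i - ((∑ l, (k l : ℂ) * f k l) / (k2 k : ℂ)) * (k i : ℂ)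

/-- Fourier coefficients of `b̃·∇f`. -/
def bgrad {n : ℕ} (b : Fin n → ℝ) (f : Coef n) (k : Freq n) (i : Fin n) : ℂ :=
  Complex.I * (bdot b k : ℂ) * f k i

/-- The Fourier multiplier `Λ^s = (-Δ)^{s/2}` (acting trivially on the zero mode when `s < 0`). -/
def lam {n : ℕ} (s : ℝ) (f : Coef n) (k : Freq n) (i : Fin n) : ℂ :=
  ((knorm k ^ s : ℝ) : ℂ) * f k i

/-- Squared `L²` norm (with normalized measure), `‖f‖_{L²}² = Σ_k |f̂(k)|²`. -/
def l2Sq {n : ℕ} (f : Coef n) : ℝ := ∑' k : Freq n, vnormSq (f k)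

/-- Squared `L²` norm of `Λ^s f`: `‖Λ^s f‖_{L²}² = Σ_k |k|^{2s}|f̂(k)|²`. -/
def lamSq {n : ℕ} (s : ℝ) (f : Coef n) : ℝ := ∑' k : Freq n, (k2 k) ^ s * vnormSq (f k)

/-- The (normalized) `L²` inner product `∫_{𝕋ⁿ} f·g dx` of two real fields, via Plancherel. -/
def l2inner {n : ℕ} (f g : Coef n) : ℝ :=
  (∑' k : Freq n, ∑ i, f k i * starRingEnd ℂ (g k i)).re

/-- `‖∇f‖_{H^s}² = Σ_k (1+|k|²)^s |k|² |f̂(k)|²`. -/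
def gradSobSq {n : ℕ} (s : ℝ) (f : Coef n) : ℝ :=
  ∑' k : Freq n, (1 + k2 k) ^ s * k2 k * vnormSq (f k)

/-- `‖∇f‖_{L^∞}`: the sup over `x ∈ 𝕋ⁿ` of the (Frobenius) norm of the gradient matrix of the
field with Fourier coefficients `f`. -/
def gradLinfty {n : ℕ} (f : Coef n) : ℝ :=
  ⨆ x : Fin n → ℝ,
    Real.sqrt (∑ i, ∑ j,
      ‖∑' k : Freq n,
          Complex.exp (Complex.I * ((∑ l, (k l : ℝ) * x l : ℝ) : ℂ)) *
            (Complex.I * (k j : ℂ) * f k i)‖ ^ 2)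

/-- `‖f‖_{L^∞}`. -/
def linfty {n : ℕ} (f : Coef n) : ℝ :=
  ⨆ x : Fin n → ℝ,
    Real.sqrt (∑ i,
      ‖∑' k : Freq n,
          Complex.exp (Complex.I * ((∑ l, (k l : ℝ) * x l : ℝ) : ℂ)) * f k i‖ ^ 2)

/-- Smoothness in space (rapid decay of the Fourier coefficients at every time). -/
def Smooth {n : ℕ} (u : ℝ → Coef n) : Prop :=
  ∀ t : ℝ, ∀ N : ℕ, Summable fun k : Freq n => (1 + k2 k) ^ (N : ℝ) * vnormSq (u t k)

/-- The perturbed incompressible MHD system on `𝕋ⁿ`,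
`∂ₜu − μΔu + u·∇u + ∇p = b̃·∇b + b·∇b`,
`∂ₜb − νΔb + u·∇b = b̃·∇u + b·∇u`, `∇·u = ∇·b = 0`,
written mode-by-mode in Fourier variables. -/
structure IsMHDSolution {n : ℕ} (btil : Fin n → ℝ) (μ ν : ℝ)
    (u b : ℝ → Coef n) (p : ℝ → Freq n → ℂ) : Prop where
  du : ∀ (t : ℝ) (k : Freq n) (i : Fin n),
      HasDerivAt (fun τ : ℝ => u τ k i)
        (-(μ : ℂ) * (k2 k : ℂ) * u t k i - transport (u t) (u t) k i
          - Complex.I * (k i : ℂ) * p t k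
          + Complex.I * (bdot btil k : ℂ) * b t k i
          + transport (b t) (b t) k i) t
  db : ∀ (t : ℝ) (k : Freq n) (i : Fin n),
      HasDerivAt (fun τ : ℝ => b τ k i)
        (-(ν : ℂ) * (k2 k : ℂ) * b t k i - transport (u t) (b t) k i
          + Complex.I * (bdot btil k : ℂ) * u t k i
          + transport (b t) (u t) k i) t
  divu : ∀ t : ℝ, DivFree (u t)
  divb : ∀ t : ℝ, DivFree (b t)

/-- `|k|⁴ − 4(b̃·k)²`, the discriminant of `λ² − |k|²λ + (b̃·k)² = 0`. -/
def disc {n : ℕ} (b : Fin n → ℝ) (k : Freq n) : ℝ := (k2 k) ^ 2 - 4 * (bdot b k) ^ 2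

/-- The (complex) square root `√(|k|⁴ − 4(b̃·k)²)`. -/
def sqrtDisc {n : ℕ} (b : Fin n → ℝ) (k : Freq n) : ℂ :=
  if 0 ≤ disc b k then ((Real.sqrt (disc b k) : ℝ) : ℂ)
  else Complex.I * ((Real.sqrt (-disc b k) : ℝ) : ℂ)

/-- `λ₊(k)`. -/
def lamP {n : ℕ} (b : Fin n → ℝ) (k : Freq n) : ℂ := ((k2 k : ℂ) + sqrtDisc b k) / 2

/-- `λ₋(k)`. -/
def lamM {n : ℕ} (b : Fin n → ℝ) (k : Freq n) : ℂ := ((k2 k : ℂ) - sqrtDisc b k) / 2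

/-- The multiplier `Ĝ(k,t) = (e^{−λ₋t} − e^{−λ₊t})/(λ₊ − λ₋)`, interpreted as
`t e^{−λ₊t}` when `λ₊ = λ₋`. -/
def Ghat {n : ℕ} (b : Fin n → ℝ) (k : Freq n) (t : ℝ) : ℂ :=
  if lamP b k = lamM b k then (t : ℂ) * Complex.exp (-lamP b k * t)
  else (Complex.exp (-lamM b k * t) - Complex.exp (-lamP b k * t)) / (lamP b k - lamM b k)

/-- `|K̂₁(k,t)| = |Ĝ(k,t)| √(|λ₊|² + (b̃·k)²)`. -/
def K1abs {n : ℕ} (b : Fin n → ℝ) (k : Freq n) (t : ℝ) : ℝ :=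
  ‖Ghat b k t‖ * Real.sqrt (‖lamP b k‖ ^ 2 + (bdot b k) ^ 2)

/-- `|K̂₂(k,t)| = |K̂₁(k,t)| |b̃·k|/|λ₊|`. -/
def K2abs {n : ℕ} (b : Fin n → ℝ) (k : Freq n) (t : ℝ) : ℝ :=
  K1abs b k t * |bdot b k| / ‖lamP b k‖

/-- `|K̂₃(k,t)| = |e^{−λ₊t}|`. -/
def K3abs {n : ℕ} (b : Fin n → ℝ) (k : Freq n) (t : ℝ) : ℝ :=
  ‖Complex.exp (-lamP b k * t)‖

end MHD

/-!
Fix a frequency `k ≠ 0` and a component. Writing `κ = |k|²` and `a = b̃·k`, the coefficients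
solve `u' = -κ u + i a b`, `b' = i a u`. The functional `κ (|u|² + |b|²) + ε a Im (ū b)` is
comparable to the energy and decays at rate `β = 2εa²/(5κ)`, and the Diophantine condition
gives `β ≳ (1 + |k|²)^{-(1+r)}`; trading powers of `1 + |k|²` for powers of `1 + t` in `e^{-βt}`
gives the decay of `B`. By Duhamel's formula `|u|²` is, up to a term `e^{-2κt} |u(0)|²`,
bounded by `(a²/κ²) e^{-βt} ≍ (β/κ) e^{-βt}`, and `β e^{-βt} ≲ (1 + t)⁻¹ e^{-βt/2}`: this yields
the extra factor `(1 + t)^{-1/2}` and the shift `m - s ↦ m - s + 1` in the bound for `U`.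
-/

open Real Set ComplexConjugate

namespace MHD

theorem exists_one_add_rpow_le_mul_exp (A : ℝ) :
    ∃ C > 0, ∀ α ≤ A, ∀ x : ℝ, 0 ≤ x → (1 + x) ^ α ≤ C * exp x := by
  set B := max A 1
  have hB : 0 < B := lt_max_of_lt_right one_pos
  refine ⟨(1 + B) ^ B, by positivity, fun α hα x hx => ?_⟩
  calc (1 + x) ^ α ≤ (1 + x) ^ B :=
        rpow_le_rpow_of_exponent_le (by linarith) (hα.trans (le_max_left A 1))
    _ ≤ ((1 + B) * (1 + x / B)) ^ B := by
        gcongr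
        have : (1 + B) * (1 + x / B) = 1 + x + B + x / B := by field_simp; ring
        linarith [div_nonneg hx hB.le]
    _ = (1 + B) ^ B * (1 + x / B) ^ B := mul_rpow (by positivity) (by positivity)
    _ ≤ (1 + B) ^ B * exp (x / B) ^ B := by gcongr; linarith [add_one_le_exp (x / B)]
    _ = (1 + B) ^ B * exp x := by rw [← exp_mul, div_mul_cancel₀ _ hB.ne']

theorem exp_neg_le_mul_rpow {A C α x : ℝ}
    (hC : ∀ α ≤ A, ∀ x : ℝ, 0 ≤ x → (1 + x) ^ α ≤ C * exp x) (hα : α ≤ A) (hx : 0 ≤ x) :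
    exp (-x) ≤ C * (1 + x) ^ (-α) := by
  rw [rpow_neg (by linarith), exp_neg, ← div_eq_mul_inv, inv_eq_one_div,
    div_le_div_iff₀ (exp_pos x) (by positivity), one_mul]
  exact hC α hα x hx

theorem exp_neg_mul_le_of_rate {A C γ p κ β t q : ℝ}
    (hC : ∀ α ≤ A, ∀ x : ℝ, 0 ≤ x → (1 + x) ^ α ≤ C * exp x)
    (hγ₀ : 0 < γ) (hγ₁ : γ ≤ 1) (hp : 0 < p) (hκ : 0 ≤ κ) (hβ : γ / (1 + κ) ^ p ≤ β)
    (ht : 0 ≤ t) (hq : 0 ≤ q) (hqA : q / p ≤ A) :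
    exp (-(β * t)) ≤ C * γ ^ (-A) * (1 + κ) ^ q * (1 + t) ^ (-(q / p)) := by
  set z := (1 + κ) ^ p
  have hz : 1 ≤ z := one_le_rpow (by linarith) hp.le
  have hγz : γ / z ≤ 1 := (div_le_one₀ (by positivity)).2 (hγ₁.trans hz)
  have hzq : z ^ (q / p) = (1 + κ) ^ q := by
    rw [← rpow_mul (by linarith), mul_div_cancel₀ _ hp.ne']
  have hC₀ : 1 ≤ C := by simpa using hC A le_rfl 0 le_rfl
  calc exp (-(β * t)) ≤ exp (-(γ / z * t)) := by gcongr
    _ ≤ C * (1 + γ / z * t) ^ (-(q / p)) := exp_neg_le_mul_rpow hC hqA (by positivity)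
    _ ≤ C * (γ / z * (1 + t)) ^ (-(q / p)) := by
        gcongr C * ?_
        exact rpow_le_rpow_of_nonpos (by positivity) (by nlinarith) (by simp; positivity)
    _ = C * γ ^ (-(q / p)) * z ^ (q / p) * (1 + t) ^ (-(q / p)) := by
        rw [mul_rpow (by positivity) (by linarith), div_rpow hγ₀.le (by positivity),
          rpow_neg (x := z) (by positivity), div_inv_eq_mul]
        ring
    _ ≤ C * γ ^ (-A) * (1 + κ) ^ q * (1 + t) ^ (-(q / p)) := by
        rw [hzq]
        gcongr C * ?_ * _ * _
        exact rpow_le_rpow_of_exponent_ge hγ₀ hγ₁ (by linarith)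

theorem rpow_mul_exp_neg_le_of_rate {A C γ p κ β s m t : ℝ}
    (hC : ∀ α ≤ A, ∀ x : ℝ, 0 ≤ x → (1 + x) ^ α ≤ C * exp x)
    (hγ₀ : 0 < γ) (hγ₁ : γ ≤ 1) (hp : 0 < p) (hκ : 0 ≤ κ) (hβ : γ / (1 + κ) ^ p ≤ β)
    (ht : 0 ≤ t) (hsm : s ≤ m) (hA : (m - s) / p ≤ A) :
    (1 + κ) ^ s * exp (-(β * t)) ≤ C * γ ^ (-A) * (1 + t) ^ (-((m - s) / p)) * (1 + κ) ^ m := by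
  have h := exp_neg_mul_le_of_rate hC hγ₀ hγ₁ hp hκ hβ ht (sub_nonneg.2 hsm) hA
  calc (1 + κ) ^ s * exp (-(β * t))
      ≤ (1 + κ) ^ s * (C * γ ^ (-A) * (1 + κ) ^ (m - s) * (1 + t) ^ (-((m - s) / p))) := by
        gcongr
    _ = C * γ ^ (-A) * (1 + t) ^ (-((m - s) / p)) * ((1 + κ) ^ s * (1 + κ) ^ (m - s)) := by ring
    _ = C * γ ^ (-A) * (1 + t) ^ (-((m - s) / p)) * (1 + κ) ^ m := by
        rw [← rpow_add (by linarith), add_sub_cancel]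

theorem mul_exp_neg_mul_le {β V t : ℝ} (hβ : 0 ≤ β) (hβV : β ≤ V) (ht : 0 ≤ t) :
    β * exp (-(β * t)) ≤ (V + 2) * (1 + t)⁻¹ * exp (-(β / 2 * t)) := by
  have hhalf : exp (-(β * t)) = exp (-(β / 2 * t)) * exp (-(β / 2 * t)) := by
    rw [← exp_add]; ring_nf
  have hlin : β * t ≤ 2 * exp (β / 2 * t) := by linarith [add_one_le_exp (β / 2 * t)]
  have hV : V ≤ V * exp (β / 2 * t) :=
    le_mul_of_one_le_right (hβ.trans hβV) (one_le_exp (by positivity))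
  have key : β * (1 + t) * exp (-(β / 2 * t)) ≤ V + 2 := by
    rw [exp_neg, ← div_eq_mul_inv, div_le_iff₀ (exp_pos _)]
    nlinarith [exp_pos (β / 2 * t)]
  have hdiv : β * exp (-(β / 2 * t)) ≤ (V + 2) * (1 + t)⁻¹ := by
    rw [← div_eq_mul_inv, le_div_iff₀ (by positivity)]
    linarith
  calc β * exp (-(β * t)) = β * exp (-(β / 2 * t)) * exp (-(β / 2 * t)) := by
        rw [hhalf, mul_assoc]
    _ ≤ (V + 2) * (1 + t)⁻¹ * exp (-(β / 2 * t)) := by gcongr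

theorem rpow_mul_div_mul_exp_neg_le_of_rate {A C γ p κ β V s m t : ℝ}
    (hC : ∀ α ≤ A, ∀ x : ℝ, 0 ≤ x → (1 + x) ^ α ≤ C * exp x)
    (hγ₀ : 0 < γ) (hγ₁ : γ ≤ 1) (hp : 0 < p) (hκ : 1 ≤ κ) (hβ₀ : 0 ≤ β) (hβV : β ≤ V)
    (hβ : γ / (1 + κ) ^ p ≤ β / 2) (ht : 0 ≤ t) (hsm : s ≤ m) (hA : (m - s + 1) / p ≤ A) :
    (1 + κ) ^ s * (β / κ * exp (-(β * t))) ≤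
      2 * (V + 2) * C * γ ^ (-A) * (1 + t) ^ (-(1 + (m - s + 1) / p)) * (1 + κ) ^ m := by
  have hκ₀ : 0 < κ := one_pos.trans_le hκ
  have hinv : (1 + κ) ^ s / κ ≤ 2 * (1 + κ) ^ (s - 1) := by
    rw [rpow_sub_one (by linarith), div_le_iff₀ hκ₀]
    field_simp
    nlinarith [rpow_pos_of_pos (by linarith : (0:ℝ) < 1 + κ) s]
  have hslow := rpow_mul_exp_neg_le_of_rate hC hγ₀ hγ₁ hp (by linarith) hβ ht
    (by linarith : s - 1 ≤ m) (by convert hA using 2; ring)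
  have htime : (1 + t)⁻¹ * (1 + t) ^ (-((m - (s - 1)) / p)) =
      (1 + t) ^ (-(1 + (m - s + 1) / p)) := by
    rw [← rpow_neg_one, ← rpow_add (by linarith)]; ring_nf
  have hfactor : 0 ≤ 2 * (V + 2) * (1 + t)⁻¹ :=
    mul_nonneg (by linarith) (inv_nonneg.2 (by linarith))
  calc (1 + κ) ^ s * (β / κ * exp (-(β * t)))
      = (1 + κ) ^ s / κ * (β * exp (-(β * t))) := by ring
    _ ≤ 2 * (1 + κ) ^ (s - 1) * ((V + 2) * (1 + t)⁻¹ * exp (-(β / 2 * t))) :=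
        mul_le_mul hinv (mul_exp_neg_mul_le hβ₀ hβV ht) (by positivity) (by positivity)
    _ = 2 * (V + 2) * (1 + t)⁻¹ * ((1 + κ) ^ (s - 1) * exp (-(β / 2 * t))) := by ring
    _ ≤ 2 * (V + 2) * (1 + t)⁻¹ *
          (C * γ ^ (-A) * (1 + t) ^ (-((m - (s - 1)) / p)) * (1 + κ) ^ m) :=
        mul_le_mul_of_nonneg_left hslow hfactor
    _ = 2 * (V + 2) * C * γ ^ (-A) * ((1 + t)⁻¹ * (1 + t) ^ (-((m - (s - 1)) / p))) *
          (1 + κ) ^ m := by ring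
    _ = _ := by rw [htime]

theorem le_mul_exp_of_hasDerivAt_le {f f' : ℝ → ℝ} {K : ℝ} (hf : ∀ t, HasDerivAt f (f' t) t)
    (bound : ∀ t, f' t ≤ K * f t) {t : ℝ} (ht : 0 ≤ t) : f t ≤ f 0 * exp (K * t) := by
  have := le_gronwallBound_of_liminf_deriv_right_le (f := f) (f' := f') (δ := f 0) (K := K)
    (ε := 0) (a := 0) (b := t) (fun τ _ => (hf τ).continuousAt.continuousWithinAt)
    (fun τ _ r hr => (hf τ).hasDerivWithinAt.liminf_right_slope_le hr) le_rfl
    (fun τ _ => by simpa using bound τ) t ⟨ht, le_rfl⟩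
  simpa [gronwallBound_ε0] using this

theorem norm_le_of_hasDerivAt_damped {E : Type*} [NormedAddCommGroup E] [NormedSpace ℝ E]
    {u g : ℝ → E} {κ δ K : ℝ} (hδκ : δ < κ)
    (hu : ∀ t, HasDerivAt u ((-κ) • u t + g t) t)
    (hg : ∀ t, 0 ≤ t → ‖g t‖ ≤ K * exp (-(δ * t))) {t : ℝ} (ht : 0 ≤ t) :
    ‖u t‖ ≤ exp (-(κ * t)) * ‖u 0‖ + K / (κ - δ) * exp (-(δ * t)) := by
  have hK : 0 ≤ K := by simpa using (norm_nonneg _).trans (hg 0 le_rfl)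
  have hκδ : 0 < κ - δ := sub_pos.2 hδκ
  have hw : ∀ τ, HasDerivAt (fun τ => exp (κ * τ) • u τ) (exp (κ * τ) • g τ) τ := by
    intro τ
    refine (((hasDerivAt_id τ).const_mul κ).exp.smul (hu τ)).congr_deriv ?_
    simp only [id, mul_one]
    module
  have hB : ∀ τ, HasDerivAt (fun τ => ‖u 0‖ + K / (κ - δ) * (exp ((κ - δ) * τ) - 1))
      (K * exp ((κ - δ) * τ)) τ := by
    intro τ
    refine (((((hasDerivAt_id τ).const_mul (κ - δ)).exp).sub_const 1).const_mul (K / (κ - δ))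
      |>.const_add ‖u 0‖).congr_deriv ?_
    simp only [id, mul_one]
    field_simp
  have hbound : ∀ τ ∈ Ico 0 t, ‖exp (κ * τ) • g τ‖ ≤ K * exp ((κ - δ) * τ) := fun τ hτ => by
    rw [norm_smul, norm_of_nonneg (exp_pos _).le]
    calc exp (κ * τ) * ‖g τ‖ ≤ exp (κ * τ) * (K * exp (-(δ * τ))) := by
          gcongr; exact hg τ hτ.1
      _ = K * exp ((κ - δ) * τ) := by rw [mul_left_comm, ← exp_add]; ring_nf
  have hfence := image_norm_le_of_norm_deriv_right_le_deriv_boundary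
    (fun τ _ => (hw τ).continuousAt.continuousWithinAt) (fun τ _ => (hw τ).hasDerivWithinAt)
    (by simp) hB hbound ⟨ht, le_rfl⟩
  rw [norm_smul, norm_of_nonneg (exp_pos _).le] at hfence
  have hsplit : exp (-(δ * t)) = exp (-(κ * t)) * exp ((κ - δ) * t) := by
    rw [← exp_add]; ring_nf
  have hdrop : K / (κ - δ) * (exp ((κ - δ) * t) - 1) ≤ K / (κ - δ) * exp ((κ - δ) * t) := by
    gcongr; linarith
  calc ‖u t‖ = exp (-(κ * t)) * (exp (κ * t) * ‖u t‖) := by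
        rw [← mul_assoc, ← exp_add, neg_add_cancel, exp_zero, one_mul]
    _ ≤ exp (-(κ * t)) * (‖u 0‖ + K / (κ - δ) * exp ((κ - δ) * t)) := by
        gcongr; linarith
    _ = exp (-(κ * t)) * ‖u 0‖ + K / (κ - δ) * exp (-(δ * t)) := by rw [hsplit]; ring

theorem mul_abs_le_half_of_mul_sq_le {κ a ε : ℝ} (hκ : 0 < κ) (hε₀ : 0 < ε) (hε₁ : ε ≤ 1 / 2)
    (hεa : ε * a ^ 2 ≤ κ ^ 2 / 2) : ε * |a| ≤ κ / 2 := by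
  have hsq : (ε * |a|) ^ 2 ≤ (κ / 2) ^ 2 := by
    rw [mul_pow, sq_abs]; nlinarith
  exact (pow_le_pow_iff_left₀ (by positivity) (by positivity) two_ne_zero).1 hsq

theorem mul_abs_le_quarter_sq_add_sq {κ a ε x y H : ℝ} (hκ : 0 < κ) (hε₀ : 0 < ε)
    (hε₁ : ε ≤ 1 / 2) (hεa : ε * a ^ 2 ≤ κ ^ 2 / 2) (hx : 0 ≤ x) (hy : 0 ≤ y)
    (hH : |H| ≤ |a| * (x * y)) : ε * |H| ≤ κ / 4 * (x ^ 2 + y ^ 2) := by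
  have hεa' := mul_abs_le_half_of_mul_sq_le hκ hε₀ hε₁ hεa
  calc ε * |H| ≤ ε * |a| * (x * y) := by rw [mul_assoc]; gcongr
    _ ≤ κ / 2 * (x * y) := by gcongr
    _ ≤ κ / 4 * (x ^ 2 + y ^ 2) := by nlinarith [sq_nonneg (x - y)]

theorem lyapunov_deriv_le {κ a ε x y H : ℝ} (hκ : 0 < κ) (hε₀ : 0 < ε) (hε₁ : ε ≤ 1 / 2)
    (hεa : ε * a ^ 2 ≤ κ ^ 2 / 2) (hH : |H| ≤ |a| * (x * y)) :
    κ * -(2 * κ * x ^ 2) + ε * (-κ * H + a ^ 2 * (x ^ 2 - y ^ 2)) ≤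
      -(2 * ε * a ^ 2 / (5 * κ)) * (κ * (x ^ 2 + y ^ 2) + ε * H) := by
  have hamgm : κ * (ε * |H|) ≤ κ ^ 2 * x ^ 2 / 4 + ε ^ 2 * a ^ 2 * y ^ 2 := by
    have := mul_le_mul_of_nonneg_left hH (by positivity : 0 ≤ κ * ε)
    have hsq : (ε * |a| * y) ^ 2 = ε ^ 2 * a ^ 2 * y ^ 2 := by rw [mul_pow, mul_pow, sq_abs]
    nlinarith [sq_nonneg (κ * x / 2 - ε * |a| * y)]
  have hcross : ε * H * (2 * ε * a ^ 2 - 5 * κ ^ 2) ≤ 5 * κ ^ 2 * (ε * |H|) := by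
    have hc : |2 * ε * a ^ 2 - 5 * κ ^ 2| ≤ 5 * κ ^ 2 := by
      rw [abs_le]; constructor <;> nlinarith [mul_nonneg hε₀.le (sq_nonneg a)]
    calc ε * H * (2 * ε * a ^ 2 - 5 * κ ^ 2)
        ≤ |ε * H| * |2 * ε * a ^ 2 - 5 * κ ^ 2| := by rw [← abs_mul]; exact le_abs_self _
      _ ≤ ε * |H| * (5 * κ ^ 2) := by
          rw [abs_mul, abs_of_pos hε₀]; gcongr
      _ = 5 * κ ^ 2 * (ε * |H|) := by ring
  have hε2 : ε ^ 2 * a ^ 2 * y ^ 2 ≤ ε * a ^ 2 * y ^ 2 / 2 := by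
    have := mul_le_mul_of_nonneg_right hε₁ (by positivity : 0 ≤ ε * a ^ 2 * y ^ 2)
    nlinarith
  have key : 5 * κ * (κ * -(2 * κ * x ^ 2) + ε * (-κ * H + a ^ 2 * (x ^ 2 - y ^ 2))) ≤
      5 * κ * (-(2 * ε * a ^ 2 / (5 * κ)) * (κ * (x ^ 2 + y ^ 2) + ε * H)) := by
    have hexp : 5 * κ * (-(2 * ε * a ^ 2 / (5 * κ)) * (κ * (x ^ 2 + y ^ 2) + ε * H)) =
        -(2 * ε * a ^ 2) * (κ * (x ^ 2 + y ^ 2) + ε * H) := by field_simp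
    rw [hexp]
    nlinarith [mul_le_mul_of_nonneg_left hamgm (by positivity : (0:ℝ) ≤ 5 * κ),
      mul_le_mul_of_nonneg_left hε2 (by positivity : (0:ℝ) ≤ 5 * κ),
      mul_le_mul_of_nonneg_right hεa (by positivity : (0:ℝ) ≤ κ * x ^ 2),
      mul_nonneg (mul_nonneg hε₀.le (sq_nonneg a)) (mul_nonneg hκ.le (sq_nonneg y)),
      mul_nonneg hκ.le (sq_nonneg (κ * x))]
  exact le_of_mul_le_mul_left key (by positivity)

theorem abs_mul_im_conj_mul_le (a : ℝ) (z w : ℂ) : |a * (conj z * w).im| ≤ |a| * (‖z‖ * ‖w‖) := by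
  rw [abs_mul]
  gcongr
  calc |(conj z * w).im| ≤ ‖conj z * w‖ := Complex.abs_im_le_norm _
    _ = ‖z‖ * ‖w‖ := by rw [norm_mul, RCLike.norm_conj]

structure IsModeSolution (κ a : ℝ) (u b : ℝ → ℂ) : Prop where
  hasDerivAt_fst : ∀ t, HasDerivAt u (-(κ : ℂ) * u t + Complex.I * a * b t) t
  hasDerivAt_snd : ∀ t, HasDerivAt b (Complex.I * a * u t) t

namespace IsModeSolution

variable {κ a : ℝ} {u b : ℝ → ℂ}

theorem hasDerivAt_energy (h : IsModeSolution κ a u b) (t : ℝ) :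
    HasDerivAt (fun τ => ‖u τ‖ ^ 2 + ‖b τ‖ ^ 2) (-(2 * κ * ‖u t‖ ^ 2)) t := by
  refine ((h.hasDerivAt_fst t).norm_sq.add (h.hasDerivAt_snd t).norm_sq).congr_deriv ?_
  simp only [Complex.inner, Complex.sq_norm, Complex.normSq_apply, Complex.mul_re,
    Complex.mul_im, Complex.add_re, Complex.add_im, Complex.neg_re, Complex.neg_im,
    Complex.ofReal_re, Complex.ofReal_im, Complex.I_re, Complex.I_im, Complex.conj_re,
    Complex.conj_im]
  ring

theorem hasDerivAt_cross (h : IsModeSolution κ a u b) (t : ℝ) :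
    HasDerivAt (fun τ => a * (conj (u τ) * b τ).im)
      (-κ * (a * (conj (u t) * b t).im) + a ^ 2 * (‖u t‖ ^ 2 - ‖b t‖ ^ 2)) t := by
  have hprod := (h.hasDerivAt_fst t).star.mul (h.hasDerivAt_snd t)
  refine ((Complex.imCLM.hasFDerivAt.comp_hasDerivAt t hprod).const_mul a).congr_deriv ?_
  simp only [Complex.star_def, Complex.sq_norm, Complex.normSq_apply, Complex.mul_re,
    Complex.mul_im, Complex.add_re, Complex.add_im, Complex.neg_re, Complex.neg_im,
    Complex.ofReal_re, Complex.ofReal_im, Complex.I_re, Complex.I_im, Complex.conj_re,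
    Complex.conj_im, Complex.imCLM_apply, map_add, map_mul, map_neg, Complex.conj_ofReal,
    Complex.conj_I]
  ring

theorem energy_le (h : IsModeSolution κ a u b) {ε : ℝ} (hκ : 0 < κ) (hε₀ : 0 < ε)
    (hε₁ : ε ≤ 1 / 2) (hεa : ε * a ^ 2 ≤ κ ^ 2 / 2) {t : ℝ} (ht : 0 ≤ t) :
    ‖u t‖ ^ 2 + ‖b t‖ ^ 2 ≤ 2 * exp (-(2 * ε * a ^ 2 / (5 * κ) * t)) * (‖u 0‖ ^ 2 + ‖b 0‖ ^ 2) := by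
  -- Lyapunov functional `κ (|u|² + |b|²) + ε H`: the cross term `H` lets the damping of `u`
  -- reach `b`.
  set H := fun τ => a * (conj (u τ) * b τ).im
  have hsmall : ∀ τ, ε * |H τ| ≤ κ / 4 * (‖u τ‖ ^ 2 + ‖b τ‖ ^ 2) := fun τ =>
    mul_abs_le_quarter_sq_add_sq hκ hε₀ hε₁ hεa (norm_nonneg _) (norm_nonneg _)
      (abs_mul_im_conj_mul_le a (u τ) (b τ))
  have hM : κ * (‖u t‖ ^ 2 + ‖b t‖ ^ 2) + ε * H t ≤
      (κ * (‖u 0‖ ^ 2 + ‖b 0‖ ^ 2) + ε * H 0) * exp (-(2 * ε * a ^ 2 / (5 * κ)) * t) :=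
    le_mul_exp_of_hasDerivAt_le
      (fun τ => ((h.hasDerivAt_energy τ).const_mul κ).add ((h.hasDerivAt_cross τ).const_mul ε))
      (fun τ => lyapunov_deriv_le hκ hε₀ hε₁ hεa (abs_mul_im_conj_mul_le a (u τ) (b τ))) ht
  have hlow : -(ε * |H t|) ≤ ε * H t := by rw [← mul_neg]; gcongr; exact neg_abs_le _
  have hup : ε * H 0 ≤ ε * |H 0| := by gcongr; exact le_abs_self _
  have hE₀ : 0 ≤ ‖u 0‖ ^ 2 + ‖b 0‖ ^ 2 := by positivity
  have hexp := exp_pos (-(2 * ε * a ^ 2 / (5 * κ)) * t)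
  have hM0 : κ * (‖u 0‖ ^ 2 + ‖b 0‖ ^ 2) + ε * H 0 ≤ 5 * κ / 4 * (‖u 0‖ ^ 2 + ‖b 0‖ ^ 2) := by
    linarith [hsmall 0]
  have key : κ * (‖u t‖ ^ 2 + ‖b t‖ ^ 2) ≤
      κ * (2 * exp (-(2 * ε * a ^ 2 / (5 * κ)) * t) * (‖u 0‖ ^ 2 + ‖b 0‖ ^ 2)) := by
    nlinarith [hsmall t, mul_le_mul_of_nonneg_right hM0 hexp.le, mul_nonneg hexp.le hE₀]
  rw [← neg_mul]
  exact le_of_mul_le_mul_left key hκ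

theorem norm_fst_sq_le (h : IsModeSolution κ a u b) {β E : ℝ} (hκ : 0 < κ) (hβκ : β ≤ κ)
    (hb : ∀ s, 0 ≤ s → ‖b s‖ ^ 2 ≤ 2 * exp (-(β * s)) * E) {t : ℝ} (ht : 0 ≤ t) :
    ‖u t‖ ^ 2 ≤ 2 * exp (-(2 * κ * t)) * ‖u 0‖ ^ 2 + 16 * a ^ 2 / κ ^ 2 * exp (-(β * t)) * E := by
  have hE : 0 ≤ E := by nlinarith [hb 0 le_rfl, sq_nonneg ‖b 0‖, exp_pos (-(β * 0))]
  have hbnorm : ∀ s, 0 ≤ s → ‖b s‖ ≤ √(2 * E) * exp (-(β / 2 * s)) := fun s hs => by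
    refine (pow_le_pow_iff_left₀ (norm_nonneg _) (by positivity) two_ne_zero).1 ?_
    calc ‖b s‖ ^ 2 ≤ 2 * exp (-(β * s)) * E := hb s hs
      _ = (√(2 * E) * exp (-(β / 2 * s))) ^ 2 := by
        rw [mul_pow, sq_sqrt (by positivity), sq, ← exp_add]; ring_nf
  have hduhamel := norm_le_of_hasDerivAt_damped (u := u) (g := fun s => Complex.I * a * b s)
    (κ := κ) (δ := β / 2) (K := |a| * √(2 * E)) (by linarith)
    (fun s => by simpa [Complex.real_smul] using h.hasDerivAt_fst s)
    (fun s hs => by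
      simp only [norm_mul, Complex.norm_I, Complex.norm_real, Real.norm_eq_abs, one_mul, mul_assoc]
      gcongr; exact hbnorm s hs) ht
  have hcoef : |a| * √(2 * E) / (κ - β / 2) ≤ 2 * |a| * √(2 * E) / κ := by
    rw [div_le_div_iff₀ (by linarith) hκ]
    nlinarith [mul_nonneg (abs_nonneg a) (sqrt_nonneg (2 * E))]
  set x := exp (-(κ * t)) * ‖u 0‖
  set y := 2 * |a| * √(2 * E) / κ * exp (-(β / 2 * t))
  have hxy : ‖u t‖ ≤ x + y :=
    hduhamel.trans (add_le_add_right (mul_le_mul_of_nonneg_right hcoef (exp_pos _).le) _)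
  calc ‖u t‖ ^ 2 ≤ (x + y) ^ 2 := by gcongr
    _ ≤ 2 * x ^ 2 + 2 * y ^ 2 := by nlinarith [sq_nonneg (x - y)]
    _ = 2 * exp (-(2 * κ * t)) * ‖u 0‖ ^ 2 + 16 * a ^ 2 / κ ^ 2 * exp (-(β * t)) * E := by
      simp only [x, y, mul_pow, div_pow, sq_abs, sq_sqrt (by positivity : (0:ℝ) ≤ 2 * E),
        ← exp_nat_mul]
      push_cast; ring_nf

theorem weighted_snd_le (h : IsModeSolution κ a u b) {A C γ p ε s m t : ℝ}
    (hC : ∀ α ≤ A, ∀ x : ℝ, 0 ≤ x → (1 + x) ^ α ≤ C * exp x) (hγ₀ : 0 < γ) (hγ₁ : γ ≤ 1)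
    (hp : 0 < p) (hκ : 0 < κ) (hε₀ : 0 < ε) (hε₁ : ε ≤ 1 / 2) (hεa : ε * a ^ 2 ≤ κ ^ 2 / 2)
    (hrate : γ / (1 + κ) ^ p ≤ ε * a ^ 2 / (5 * κ)) (ht : 0 ≤ t) (hsm : s ≤ m)
    (hA : (m - s) / p ≤ A) :
    (1 + κ) ^ s * ‖b t‖ ^ 2 ≤
      2 * C * γ ^ (-A) * (1 + t) ^ (-((m - s) / p)) * ((1 + κ) ^ m * (‖u 0‖ ^ 2 + ‖b 0‖ ^ 2)) := by
  have hrate' : γ / (1 + κ) ^ p ≤ 2 * ε * a ^ 2 / (5 * κ) :=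
    hrate.trans (by gcongr; linarith)
  have hslow := rpow_mul_exp_neg_le_of_rate hC hγ₀ hγ₁ hp hκ.le hrate' ht hsm hA
  calc (1 + κ) ^ s * ‖b t‖ ^ 2
      ≤ (1 + κ) ^ s * (2 * exp (-(2 * ε * a ^ 2 / (5 * κ) * t)) * (‖u 0‖ ^ 2 + ‖b 0‖ ^ 2)) := by
        gcongr
        linarith [h.energy_le hκ hε₀ hε₁ hεa ht, sq_nonneg ‖u t‖]
    _ = 2 * (‖u 0‖ ^ 2 + ‖b 0‖ ^ 2) * ((1 + κ) ^ s * exp (-(2 * ε * a ^ 2 / (5 * κ) * t))) := by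
        ring
    _ ≤ 2 * (‖u 0‖ ^ 2 + ‖b 0‖ ^ 2) *
          (C * γ ^ (-A) * (1 + t) ^ (-((m - s) / p)) * (1 + κ) ^ m) := by gcongr
    _ = _ := by ring

theorem weighted_fst_le (h : IsModeSolution κ a u b) {A C γ p ε V s m t : ℝ}
    (hC : ∀ α ≤ A, ∀ x : ℝ, 0 ≤ x → (1 + x) ^ α ≤ C * exp x) (hγ₀ : 0 < γ) (hγ₁ : γ ≤ 1)
    (hp : 0 < p) (hκ : 1 ≤ κ) (hε₀ : 0 < ε) (hε₁ : ε ≤ 1 / 2) (hεa : ε * a ^ 2 ≤ κ ^ 2 / 2)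
    (hV : a ^ 2 ≤ V * κ) (hrate : γ / (1 + κ) ^ p ≤ ε * a ^ 2 / (5 * κ)) (ht : 0 ≤ t)
    (hsm : s ≤ m) (hA : 1 + (m - s + 1) / p ≤ A) :
    (1 + κ) ^ s * ‖u t‖ ^ 2 ≤
      (2 * C + 80 * (V + 2) * C * γ ^ (-A) / ε) * (1 + t) ^ (-(1 + (m - s + 1) / p)) *
        ((1 + κ) ^ m * (‖u 0‖ ^ 2 + ‖b 0‖ ^ 2)) := by
  have hκ₀ : 0 < κ := one_pos.trans_le hκ
  set β := 2 * ε * a ^ 2 / (5 * κ)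
  set E := ‖u 0‖ ^ 2 + ‖b 0‖ ^ 2
  set T := (1 + t) ^ (-(1 + (m - s + 1) / p))
  have hβκ : β ≤ κ := by
    rw [div_le_iff₀ (by positivity)]; nlinarith
  have hβV : β ≤ V := by
    rw [div_le_iff₀ (by positivity)]; nlinarith [mul_nonneg hε₀.le (sq_nonneg a)]
  have hu := h.norm_fst_sq_le (E := E) hκ₀ hβκ
    (fun s hs => by linarith [h.energy_le hκ₀ hε₀ hε₁ hεa hs, sq_nonneg ‖u s‖]) ht
  have hfast : (1 + κ) ^ s * (2 * exp (-(2 * κ * t)) * ‖u 0‖ ^ 2) ≤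
      2 * C * T * ((1 + κ) ^ m * E) := by
    have hexp : exp (-(2 * κ * t)) ≤ C * T :=
      (exp_le_exp.2 (by nlinarith)).trans (exp_neg_le_mul_rpow hC hA ht)
    have hweight : (1 + κ) ^ s ≤ (1 + κ) ^ m := rpow_le_rpow_of_exponent_le (by linarith) hsm
    have hE : ‖u 0‖ ^ 2 ≤ E := by simp only [E]; linarith [sq_nonneg ‖b 0‖]
    calc (1 + κ) ^ s * (2 * exp (-(2 * κ * t)) * ‖u 0‖ ^ 2)
        ≤ (1 + κ) ^ m * (2 * (C * T) * E) := by
          have hC₀ : 1 ≤ C := by simpa using hC _ hA 0 le_rfl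
          gcongr
      _ = 2 * C * T * ((1 + κ) ^ m * E) := by ring
  have hslow : (1 + κ) ^ s * (16 * a ^ 2 / κ ^ 2 * exp (-(β * t)) * E) ≤
      80 * (V + 2) * C * γ ^ (-A) / ε * T * ((1 + κ) ^ m * E) := by
    have hcoef : 16 * a ^ 2 / κ ^ 2 = 40 / ε * (β / κ) := by simp only [β]; field_simp; ring
    have hdecay := rpow_mul_div_mul_exp_neg_le_of_rate hC hγ₀ hγ₁ hp hκ (by positivity) hβV
      (hrate.trans_eq (by simp only [β]; ring)) ht hsm (by linarith [hA])
    calc (1 + κ) ^ s * (16 * a ^ 2 / κ ^ 2 * exp (-(β * t)) * E)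
        = 40 / ε * E * ((1 + κ) ^ s * (β / κ * exp (-(β * t)))) := by rw [hcoef]; ring
      _ ≤ 40 / ε * E * (2 * (V + 2) * C * γ ^ (-A) * T * (1 + κ) ^ m) := by gcongr
      _ = 80 * (V + 2) * C * γ ^ (-A) / ε * T * ((1 + κ) ^ m * E) := by ring
  calc (1 + κ) ^ s * ‖u t‖ ^ 2
      ≤ (1 + κ) ^ s * (2 * exp (-(2 * κ * t)) * ‖u 0‖ ^ 2) +
          (1 + κ) ^ s * (16 * a ^ 2 / κ ^ 2 * exp (-(β * t)) * E) := by
        rw [← mul_add]; gcongr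
    _ ≤ _ := by linarith

theorem eq_initial (h : IsModeSolution 0 0 u b) (t : ℝ) :
    u t = u 0 ∧ b t = b 0 := by
  have hu : ∀ τ, HasDerivAt u 0 τ := fun τ => (h.hasDerivAt_fst τ).congr_deriv (by simp)
  have hb : ∀ τ, HasDerivAt b 0 τ := fun τ => (h.hasDerivAt_snd τ).congr_deriv (by simp)
  exact ⟨is_const_of_deriv_eq_zero (fun τ => (hu τ).differentiableAt) (fun τ => (hu τ).deriv) t 0,
    is_const_of_deriv_eq_zero (fun τ => (hb τ).differentiableAt) (fun τ => (hb τ).deriv) t 0⟩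

end IsModeSolution

variable {n : ℕ}

theorem k2_nonneg (k : Freq n) : 0 ≤ k2 k := Finset.sum_nonneg fun _ _ => sq_nonneg _

theorem one_le_k2 {k : Freq n} (hk : k ≠ 0) : 1 ≤ k2 k := by
  obtain ⟨i, hi⟩ := Function.ne_iff.1 hk
  have hki : (1 : ℝ) ≤ (k i : ℝ) ^ 2 := by
    have : (1 : ℤ) ≤ k i ^ 2 := by nlinarith [Int.one_le_abs hi, sq_abs (k i)]
    exact_mod_cast this
  exact hki.trans (Finset.single_le_sum (f := fun j => (k j : ℝ) ^ 2)
    (fun j _ => sq_nonneg _) (Finset.mem_univ i))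

theorem k2_zero : k2 (0 : Freq n) = 0 := by simp [k2]

theorem bdot_zero (b : Fin n → ℝ) : bdot b 0 = 0 := by simp [bdot]

theorem bdot_sq_le (b : Fin n → ℝ) (k : Freq n) : bdot b k ^ 2 ≤ vnormR b ^ 2 * k2 k := by
  rw [vnormR, sq_sqrt (Finset.sum_nonneg fun i _ => sq_nonneg _)]
  exact Finset.sum_mul_sq_le_sq_mul_sq _ _ _

theorem mul_bdot_sq_le (b : Fin n → ℝ) {k : Freq n} (hk : k ≠ 0) :
    1 / (2 * (1 + vnormR b ^ 2)) * bdot b k ^ 2 ≤ k2 k ^ 2 / 2 := by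
  have hκ := one_le_k2 hk
  have hCS := bdot_sq_le b k
  rw [div_mul_eq_mul_div, one_mul, div_le_div_iff₀ (by positivity) two_pos]
  nlinarith [sq_nonneg (vnormR b), mul_le_mul_of_nonneg_left hκ (sq_nonneg (vnormR b))]

theorem Diophantine.sq_div_le {b : Fin n → ℝ} {r c : ℝ} (hdio : Diophantine b r c) (hc : 0 ≤ c)
    (hr : 0 ≤ 1 + r) {k : Freq n} (hk : k ≠ 0) :
    c ^ 2 / (1 + k2 k) ^ (1 + r) ≤ bdot b k ^ 2 / k2 k := by
  have hκ : 0 < k2 k := one_pos.trans_le (one_le_k2 hk)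
  have hpow : knorm k ^ r * knorm k ^ r = k2 k ^ r := by
    rw [knorm, ← mul_rpow (sqrt_nonneg _) (sqrt_nonneg _), mul_self_sqrt hκ.le]
  have hsq : c ^ 2 ≤ bdot b k ^ 2 * k2 k ^ r := by
    have hkn : 0 < knorm k ^ r := rpow_pos_of_pos (sqrt_pos.2 hκ) r
    have h := pow_le_pow_left₀ (div_nonneg hc hkn.le) (hdio k hk) 2
    rw [div_pow, sq_abs, div_le_iff₀ (by positivity), sq (knorm k ^ r), hpow] at h
    exact h
  calc c ^ 2 / (1 + k2 k) ^ (1 + r) ≤ c ^ 2 / (k2 k ^ r * k2 k) := by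
        gcongr
        rw [← rpow_add_one hκ.ne', add_comm]
        exact rpow_le_rpow hκ.le (by linarith) hr
    _ ≤ bdot b k ^ 2 * k2 k ^ r / (k2 k ^ r * k2 k) := by gcongr
    _ = bdot b k ^ 2 / k2 k := by field_simp

theorem Diophantine.rate_le {b : Fin n → ℝ} {r c ε : ℝ} (hdio : Diophantine b r c)
    (hc : 0 < c) (hr : 0 < 1 + r) (hε : 0 < ε) {k : Freq n} (hk : k ≠ 0) :
    min 1 (ε * c ^ 2 / 5) / (1 + k2 k) ^ (1 + r) ≤ ε * bdot b k ^ 2 / (5 * k2 k) := by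
  have hκ : 0 < k2 k := one_pos.trans_le (one_le_k2 hk)
  calc min 1 (ε * c ^ 2 / 5) / (1 + k2 k) ^ (1 + r)
      ≤ ε * c ^ 2 / 5 / (1 + k2 k) ^ (1 + r) := by gcongr; exact min_le_right _ _
    _ = ε / 5 * (c ^ 2 / (1 + k2 k) ^ (1 + r)) := by ring
    _ ≤ ε / 5 * (bdot b k ^ 2 / k2 k) :=
        mul_le_mul_of_nonneg_left (hdio.sq_div_le hc.le hr.le hk) (by positivity)
    _ = ε * bdot b k ^ 2 / (5 * k2 k) := by field_simp

theorem vnormSq_nonneg (v : Fin n → ℂ) : 0 ≤ vnormSq v := Finset.sum_nonneg fun _ _ => by positivity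

theorem mul_vnormSq_le {w c : ℝ} {v x y : Fin n → ℂ}
    (h : ∀ i, w * ‖v i‖ ^ 2 ≤ c * (‖x i‖ ^ 2 + ‖y i‖ ^ 2)) :
    w * vnormSq v ≤ c * (vnormSq x + vnormSq y) := by
  simp only [vnormSq, Finset.mul_sum, ← Finset.sum_add_distrib]
  exact Finset.sum_le_sum fun i _ => h i

theorem sobNorm_le_of_modewise_le {s m K : ℝ} {f g h : Coef n} (hK : 0 ≤ K) (hg : MemSob m g)
    (hh : MemSob m h)
    (hf : ∀ k, (1 + k2 k) ^ s * vnormSq (f k) ≤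
      K ^ 2 * ((1 + k2 k) ^ m * (vnormSq (g k) + vnormSq (h k)))) :
    sobNorm s f ≤ K * pairNorm m g h := by
  have hsum : Summable fun k => K ^ 2 * ((1 + k2 k) ^ m * (vnormSq (g k) + vnormSq (h k))) := by
    simpa only [mul_add] using (hg.add hh).mul_left (K ^ 2)
  have hsq : sobSq s f ≤ K ^ 2 * pairSobSq m g h := by
    unfold pairSobSq sobSq
    rw [← hg.tsum_add hh, ← tsum_mul_left]
    simp only [← mul_add]
    refine Summable.tsum_le_tsum hf (hsum.of_nonneg_of_le (fun k => ?_) hf) hsum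
    exact mul_nonneg (rpow_nonneg (by linarith [k2_nonneg k]) _) (vnormSq_nonneg _)
  calc sobNorm s f ≤ √(K ^ 2 * pairSobSq m g h) := sqrt_le_sqrt hsq
    _ = K * pairNorm m g h := by rw [sqrt_mul (sq_nonneg K), sqrt_sq hK, pairNorm]

theorem sq_sqrt_mul_rpow_neg {M t ρ ρ' : ℝ} (hM : 0 ≤ M) (ht : 0 ≤ t) (hρ : 2 * ρ' = ρ) :
    (√M * (1 + t) ^ (-ρ')) ^ 2 = M * (1 + t) ^ (-ρ) := by
  rw [mul_pow, sq_sqrt hM, ← rpow_natCast, ← rpow_mul (by linarith), ← hρ]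
  ring_nf

def IsLinearizedSolution (btil : Fin n → ℝ) (U B : ℝ → Coef n) : Prop :=
  ∀ k i, IsModeSolution (k2 k) (bdot btil k) (fun τ => U τ k i) (fun τ => B τ k i)

theorem IsLinearizedSolution.eq_initial_zero {btil : Fin n → ℝ} {U B : ℝ → Coef n}
    (hsol : IsLinearizedSolution btil U B) (t : ℝ) : U t 0 = U 0 0 ∧ B t 0 = B 0 0 := by
  have h (i : Fin n) : IsModeSolution 0 0 (fun τ => U τ 0 i) (fun τ => B τ 0 i) := by
    simpa only [k2_zero, bdot_zero] using hsol 0 i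
  exact ⟨funext fun i => ((h i).eq_initial t).1, funext fun i => ((h i).eq_initial t).2⟩

theorem IsLinearizedSolution.exists_modewise_decay {btil : Fin n → ℝ} {U B : ℝ → Coef n}
    {r c m : ℝ} (hsol : IsLinearizedSolution btil U B) (hr : 0 < 1 + r) (hc : 0 < c)
    (hdio : Diophantine btil r c) (hU₀ : U 0 0 = 0) (hB₀ : B 0 0 = 0) :
    ∃ C > 0, ∀ s, 0 ≤ s → s ≤ m → ∀ t, 0 ≤ t → ∀ k,
      (1 + k2 k) ^ s * vnormSq (U t k) ≤
        (C * (1 + t) ^ (-(1 / 2 + (m - s + 1) / (2 * (1 + r))))) ^ 2 *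
          ((1 + k2 k) ^ m * (vnormSq (U 0 k) + vnormSq (B 0 k))) ∧
      (1 + k2 k) ^ s * vnormSq (B t k) ≤
        (C * (1 + t) ^ (-((m - s) / (2 * (1 + r))))) ^ 2 *
          ((1 + k2 k) ^ m * (vnormSq (U 0 k) + vnormSq (B 0 k))) := by
  -- `ε` is admissible for every `k ≠ 0` since `(b̃·k)² ≤ |b̃|² |k|²`; `γ` comes from the
  -- Diophantine lower bound on the rate.
  set V := vnormR btil ^ 2
  set ε := 1 / (2 * (1 + V))
  have hε₀ : 0 < ε := by positivity
  have hε₁ : ε ≤ 1 / 2 := by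
    simp only [ε]; gcongr; nlinarith [sq_nonneg (vnormR btil)]
  set γ := min 1 (ε * c ^ 2 / 5)
  have hγ₀ : 0 < γ := lt_min one_pos (by positivity)
  set A := 1 + (m + 1) / (1 + r)
  obtain ⟨C₀, hC₀, hC⟩ := exists_one_add_rpow_le_mul_exp A
  set D := max (2 * C₀ + 80 * (V + 2) * C₀ * γ ^ (-A) / ε) (2 * C₀ * γ ^ (-A))
  have hD : 0 < D := lt_max_of_lt_right (by positivity)
  refine ⟨√D, sqrt_pos.2 hD, fun s hs hsm t ht k => ?_⟩
  rw [sq_sqrt_mul_rpow_neg (ρ := 1 + (m - s + 1) / (1 + r)) hD.le ht (by field_simp),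
    sq_sqrt_mul_rpow_neg (ρ := (m - s) / (1 + r)) hD.le ht (by field_simp)]
  rcases eq_or_ne k 0 with rfl | hk
  · obtain ⟨hU, hB⟩ := hsol.eq_initial_zero t
    simp [hU, hB, hU₀, hB₀, vnormSq]
  have hκ := one_le_k2 hk
  have hεa := mul_bdot_sq_le btil hk
  have hrate := hdio.rate_le hc hr hε₀ hk
  constructor <;> rw [← mul_assoc] <;> refine mul_vnormSq_le fun i => ?_
  · calc (1 + k2 k) ^ s * ‖U t k i‖ ^ 2
        ≤ (2 * C₀ + 80 * (V + 2) * C₀ * γ ^ (-A) / ε) * (1 + t) ^ (-(1 + (m - s + 1) / (1 + r))) *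
            ((1 + k2 k) ^ m * (‖U 0 k i‖ ^ 2 + ‖B 0 k i‖ ^ 2)) :=
          (hsol k i).weighted_fst_le hC hγ₀ (min_le_left _ _) hr hκ hε₀ hε₁ hεa
            (bdot_sq_le btil k) hrate ht hsm (by simp only [A]; gcongr; linarith)
      _ ≤ _ := by rw [← mul_assoc]; gcongr; exact le_max_left _ _
  · calc (1 + k2 k) ^ s * ‖B t k i‖ ^ 2
        ≤ 2 * C₀ * γ ^ (-A) * (1 + t) ^ (-((m - s) / (1 + r))) *
            ((1 + k2 k) ^ m * (‖U 0 k i‖ ^ 2 + ‖B 0 k i‖ ^ 2)) :=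
          (hsol k i).weighted_snd_le hC hγ₀ (min_le_left _ _) hr (by linarith) hε₀ hε₁ hεa
            hrate ht hsm (by
              simp only [A]
              linarith [div_le_div_of_nonneg_right (by linarith : m - s ≤ m + 1) hr.le])
      _ ≤ _ := by rw [← mul_assoc]; gcongr; exact le_max_right _ _

end MHD

open MHD in
theorem linear_stability_velocity_diffusion_general
    (n : ℕ) (r c : ℝ) (hr : (n : ℝ) - 1 < r) (hc : 0 < c)
    (btil : Fin n → ℝ) (hdio : Diophantine btil r c)
    (m : ℝ)
    (U₀ B₀ : Coef n) (hU₀ : MemSob m U₀) (hB₀ : MemSob m B₀)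
    (hmeanU₀ : U₀ 0 = 0) (hmeanB₀ : B₀ 0 = 0)
    (U B : ℝ → Coef n)
    (hU : ∀ (t : ℝ) (k : Freq n) (i : Fin n),
      HasDerivAt (fun τ : ℝ => U τ k i)
        (-(k2 k : ℂ) * U t k i + Complex.I * (bdot btil k : ℂ) * B t k i) t)
    (hB : ∀ (t : ℝ) (k : Freq n) (i : Fin n),
      HasDerivAt (fun τ : ℝ => B τ k i)
        (Complex.I * (bdot btil k : ℂ) * U t k i) t)
    (hIU : U 0 = U₀) (hIB : B 0 = B₀) :
    ∃ C > 0, ∀ s : ℝ, 0 ≤ s → s ≤ m → ∀ t : ℝ, 0 ≤ t →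
      sobNorm s (U t) ≤
        C * (1 + t) ^ (-(1 / 2 + (m - s + 1) / (2 * (1 + r)))) * pairNorm m U₀ B₀ ∧
      sobNorm s (B t) ≤
        C * (1 + t) ^ (-((m - s) / (2 * (1 + r)))) * pairNorm m U₀ B₀ := by
  have hsol : IsLinearizedSolution btil U B := fun k i => ⟨fun t => hU t k i, fun t => hB t k i⟩
  subst hIU hIB
  obtain ⟨C, hC, hdecay⟩ := hsol.exists_modewise_decay (m := m)
    (by linarith [(Nat.cast_nonneg n : (0 : ℝ) ≤ n)]) hc hdio hmeanU₀ hmeanB₀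
  refine ⟨C, hC, fun s hs hsm t ht => ⟨?_, ?_⟩⟩ <;>
    refine sobNorm_le_of_modewise_le (mul_nonneg hC.le (rpow_nonneg (by linarith) _)) hU₀ hB₀
      fun k => ?_
  exacts [(hdecay s hs hsm t ht k).1, (hdecay s hs hsm t ht k).2]

open MHD in
/-- **Linear stability I** (velocity diffusion, `μ = 1`, `ν = 0`): decay of solutions of the
linearized system `∂ₜU − ΔU = b̃·∇B`, `∂ₜB = b̃·∇U`, `∇·U = ∇·B = 0` on `𝕋ⁿ`. -/
theorem linear_stability_velocity_diffusion
    (n : ℕ) (hn : 2 ≤ n) (r c : ℝ) (hr : (n : ℝ) - 1 < r) (hc : 0 < c)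
    (btil : Fin n → ℝ) (hdio : Diophantine btil r c)
    (m : ℝ) (hm : 0 ≤ m)
    (U₀ B₀ : Coef n) (hU₀ : MemSob m U₀) (hB₀ : MemSob m B₀)
    (hdivU₀ : DivFree U₀) (hdivB₀ : DivFree B₀)
    (hmeanU₀ : U₀ 0 = 0) (hmeanB₀ : B₀ 0 = 0)
    (U B : ℝ → Coef n)
    (hU : ∀ (t : ℝ) (k : Freq n) (i : Fin n),
      HasDerivAt (fun τ : ℝ => U τ k i)
        (-(k2 k : ℂ) * U t k i + Complex.I * (bdot btil k : ℂ) * B t k i) t)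
    (hB : ∀ (t : ℝ) (k : Freq n) (i : Fin n),
      HasDerivAt (fun τ : ℝ => B τ k i)
        (Complex.I * (bdot btil k : ℂ) * U t k i) t)
    (hdivU : ∀ t : ℝ, DivFree (U t)) (hdivB : ∀ t : ℝ, DivFree (B t))
    (hIU : U 0 = U₀) (hIB : B 0 = B₀) :
    ∃ C > 0, ∀ s : ℝ, 0 ≤ s → s ≤ m → ∀ t : ℝ, 0 ≤ t →
      sobNorm s (U t) ≤
        C * (1 + t) ^ (-(1 / 2 + (m - s + 1) / (2 * (1 + r)))) * pairNorm m U₀ B₀ ∧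
      sobNorm s (B t) ≤
        C * (1 + t) ^ (-((m - s) / (2 * (1 + r)))) * pairNorm m U₀ B₀ :=
  linear_stability_velocity_diffusion_general n r c hr hc btil hdio m U₀ B₀ hU₀ hB₀ hmeanU₀ hmeanB₀
    U B hU hB hIU hIB
end
end

section
/- Kernel bounds on high frequencies (Proposition 3.3, part 2). Let b̃ ∈ ℝⁿ be a fixed nonzero constant vector and define λ±, Ĝ, K̂₁, K̂₂ as usual. Set S₃ = {k ∈ ℤⁿ\{0} : |k|⁴ − 4(b̃·k)² > |k|⁴/4}. Then there exists a constant C > 0 (depending only on |b̃|) such that for all k ∈ S₃ and all t ≥ 0: |K̂₁(k,t)| ≤ C e^{−(b̃·k)² t/|k|²} and |K̂₂(k,t)| ≤ C (|b̃·k|/|k|²) e^{−(b̃·k)² t/|k|²}. -/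
open scoped BigOperators
open MeasureTheory

noncomputable section

lemma MHD.k2_pos' {n : ℕ} {k : MHD.Freq n} (hk : k ≠ 0) : 0 < MHD.k2 k := by
  have h : ∃ i, k i ≠ 0 := by
    by_contra h; push_neg at h; exact hk (funext h)
  obtain ⟨i, hi⟩ := h
  have hi' : ((k i : ℝ)) ≠ 0 := by exact_mod_cast hi
  apply Finset.sum_pos' (fun j _ => sq_nonneg _)
  exact ⟨i, Finset.mem_univ i, by positivity⟩

set_option maxHeartbeats 1000000 in
open MHD in
/-- **Kernel bounds on high frequencies** (Proposition 3.3, part 2): on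
`S₃ = {|k|⁴ − 4(b̃·k)² > |k|⁴/4}` one has `|K̂₁| ≤ C e^{−(b̃·k)²t/|k|²}` and
`|K̂₂| ≤ C (|b̃·k|/|k|²) e^{−(b̃·k)²t/|k|²}`. -/
theorem kernel_bounds_high
    (n : ℕ) (btil : Fin n → ℝ) (hb : btil ≠ 0) :
    ∃ C > 0, ∀ k : Freq n, k ≠ 0 →
      (k2 k) ^ 2 / 4 < disc btil k →
      ∀ t : ℝ, 0 ≤ t →
        K1abs btil k t ≤ C * Real.exp (-(bdot btil k) ^ 2 * t / k2 k) ∧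
        K2abs btil k t ≤ C * (|bdot btil k| / k2 k) * Real.exp (-(bdot btil k) ^ 2 * t / k2 k) := by
  refine ⟨8, by norm_num, ?_⟩
  intro k hk hdisc t ht
  set a := k2 k with ha_def
  have ha : 0 < a := MHD.k2_pos' hk
  have hd0 : 0 < disc btil k := lt_trans (by positivity) hdisc
  set b2 := bdot btil k ^ 2 with hb2_def
  have hdisc_eq : disc btil k = a ^ 2 - 4 * b2 := rfl
  set d := Real.sqrt (disc btil k) with hd_def
  have hdpos : 0 < d := Real.sqrt_pos.mpr hd0
  have hd2 : d ^ 2 = a ^ 2 - 4 * b2 := by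
    rw [hd_def, Real.sq_sqrt hd0.le, hdisc_eq]
  have hd_le : d ≤ a := by
    rw [hd_def]
    calc Real.sqrt (disc btil k) ≤ Real.sqrt (a ^ 2) := by
          apply Real.sqrt_le_sqrt
          have hb2nn : 0 ≤ b2 := sq_nonneg _
          rw [hdisc_eq]; linarith
      _ = a := Real.sqrt_sq ha.le
  have hd_gt : a / 2 < d := by
    have h1 : (a / 2) ^ 2 < disc btil k := by
      have := hdisc; nlinarith
    exact (Real.lt_sqrt (by positivity)).mpr h1
  set lp := (a + d) / 2 with hlp_def
  set lm := (a - d) / 2 with hlm_def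
  have hlp_pos : 0 < lp := by rw [hlp_def]; linarith
  have hlm_le : lm ≤ lp := by rw [hlp_def, hlm_def]; linarith
  have hsq : sqrtDisc btil k = (d : ℂ) := by
    rw [sqrtDisc, if_pos hd0.le]
  have hlamP : lamP btil k = (lp : ℂ) := by
    rw [lamP, hsq, hlp_def]; push_cast; ring
  have hlamM : lamM btil k = (lm : ℂ) := by
    rw [lamM, hsq, hlm_def]; push_cast; ring
  have hsub : lp - lm = d := by rw [hlp_def, hlm_def]; ring
  have hne : lamP btil k ≠ lamM btil k := by
    rw [hlamP, hlamM]
    intro h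
    have h' : lp = lm := by exact_mod_cast h
    have : d = 0 := by linarith [hsub, h'.symm.le, h'.le]
    linarith
  have hlm_ge : b2 / a ≤ lm := by
    rw [div_le_iff₀ ha, hlm_def]
    nlinarith [sq_nonneg (a - d)]
  have hGhat : Ghat btil k t =
      (((Real.exp (-(lm * t)) - Real.exp (-(lp * t))) / d : ℝ) : ℂ) := by
    rw [Ghat, if_neg hne, hlamP, hlamM]
    have : (lp : ℂ) - (lm : ℂ) = (d : ℂ) := by exact_mod_cast congrArg (fun x : ℝ => (x : ℂ)) hsub
    rw [this]
    push_cast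
    ring_nf
  have hnum_nn : 0 ≤ Real.exp (-(lm * t)) - Real.exp (-(lp * t)) := by
    have h1 : -(lp * t) ≤ -(lm * t) := by nlinarith
    linarith [Real.exp_le_exp.mpr h1]
  have hnormG : ‖Ghat btil k t‖ = (Real.exp (-(lm * t)) - Real.exp (-(lp * t))) / d := by
    rw [hGhat, Complex.norm_real, Real.norm_eq_abs, abs_of_nonneg (div_nonneg hnum_nn hdpos.le)]
  set E := Real.exp (-b2 * t / a) with hE_def
  have hE_pos : 0 < E := Real.exp_pos _
  have hexp_le : Real.exp (-(lm * t)) ≤ E := by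
    apply Real.exp_le_exp.mpr
    have h1 : b2 / a * t ≤ lm * t := mul_le_mul_of_nonneg_right hlm_ge ht
    have h2 : -b2 * t / a = -(b2 / a * t) := by ring
    rw [h2]
    linarith
  have hG_le : ‖Ghat btil k t‖ ≤ E * 2 / a := by
    rw [hnormG]
    have h1 : (Real.exp (-(lm * t)) - Real.exp (-(lp * t))) / d ≤ E / d := by
      gcongr
      linarith [Real.exp_pos (-(lp * t))]
    have h2 : E / d ≤ E / (a / 2) := by
      gcongr
      all_goals first | linarith | exact hd_gt.le
    have h3 : E / (a / 2) = E * 2 / a := by ring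
    linarith
  have hnormP : ‖lamP btil k‖ = lp := by
    rw [hlamP, Complex.norm_real, Real.norm_eq_abs, abs_of_nonneg hlp_pos.le]
  have hlp_le : lp ≤ a := by rw [hlp_def]; linarith
  have hb2a : b2 ≤ a ^ 2 := by nlinarith [sq_nonneg d]
  have hsqrt_le : Real.sqrt (‖lamP btil k‖ ^ 2 + b2) ≤ 2 * a := by
    rw [hnormP]
    calc Real.sqrt (lp ^ 2 + b2) ≤ Real.sqrt ((2 * a) ^ 2) := by
          apply Real.sqrt_le_sqrt; nlinarith
      _ = 2 * a := Real.sqrt_sq (by linarith)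
  have hK1 : K1abs btil k t ≤ 4 * E := by
    rw [K1abs]
    calc ‖Ghat btil k t‖ * Real.sqrt (‖lamP btil k‖ ^ 2 + b2)
        ≤ (E * 2 / a) * (2 * a) := by
          apply mul_le_mul hG_le hsqrt_le (Real.sqrt_nonneg _) (by positivity)
      _ = 4 * E := by field_simp; ring
  constructor
  · calc K1abs btil k t ≤ 4 * E := hK1
      _ ≤ 8 * E := by linarith
  · rw [K2abs]
    have hlp_ge : a / 2 ≤ lp := by rw [hlp_def]; linarith
    rw [hnormP]
    calc K1abs btil k t * |bdot btil k| / lp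
        ≤ (4 * E) * |bdot btil k| / (a / 2) := by
          gcongr
          all_goals first
            | positivity
            | linarith
            | exact mul_le_mul_of_nonneg_right hK1 (abs_nonneg _)
      _ = 8 * (|bdot btil k| / a) * E := by field_simp; ring
end
end
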